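/- Let x, y, w, u, z, a be finite random variables such that x ⊥ (w,z) | (a,u) and y ⊥ x | (a,u). If the square matrices P(U | a, X), P(Y | a, X), and P(Y | a, U) are all invertible, then P(W, z | a, U) = P(W, z | a, X)·P(Y | a, X)^{-1}·P(Y | a, U). -/

import Mathlib

/-!
Conditioning on `u` as well as `x` and using `x ⊥ (w,z) | (a,u)`, the law of total probability
gives `P(W, z | a, X) = P(W, z | a, U) · P(U | a, X)`, and in the same way `y ⊥ x | (a,u)` gives
`P(Y | a, X) = P(Y | a, U) · P(U | a, X)`. Substituting both and cancelling the invertible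
matrices `P(U | a, X)` and `P(Y | a, U)` leaves `P(W, z | a, U)`.
-/

open Finset Matrix
open scoped Classical

noncomputable def Pr {Ω : Type*} [Fintype Ω] (μ : Ω → ℝ) (E : Ω → Prop) : ℝ :=
  ∑ ω, if E ω then μ ω else 0

noncomputable def cPr {Ω : Type*} [Fintype Ω] (μ : Ω → ℝ) (E F : Ω → Prop) : ℝ :=
  Pr μ (fun ω => E ω ∧ F ω) / Pr μ F

section Probability

variable {Ω : Type*} [Fintype Ω] (μ : Ω → ℝ)

lemma Pr_congr {E F : Ω → Prop} (h : ∀ ω, E ω ↔ F ω) : Pr μ E = Pr μ F :=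
  Finset.sum_congr rfl fun ω _ => by rw [h ω]

lemma Pr_eq_sum_Pr_and_eq {β : Type*} [Fintype β] (u : Ω → β) (E : Ω → Prop) :
    Pr μ E = ∑ j, Pr μ (fun ω => E ω ∧ u ω = j) := by
  unfold Pr
  rw [Finset.sum_comm]
  refine Finset.sum_congr rfl fun ω _ => ?_
  by_cases hE : E ω <;> simp [hE]

lemma Pr_and_eq_zero_of_Pr_eq_zero (hμ : ∀ ω, 0 ≤ μ ω) {E F : Ω → Prop} (hF : Pr μ F = 0) :
    Pr μ (fun ω => E ω ∧ F ω) = 0 := by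
  have hF0 := (Finset.sum_eq_zero_iff_of_nonneg fun ω _ => ite_nonneg (hμ ω) le_rfl).mp hF
  refine Finset.sum_eq_zero fun ω _ => ?_
  by_cases hEF : E ω ∧ F ω
  · simpa [hEF, hEF.2] using hF0 ω (Finset.mem_univ ω)
  · simp [hEF]

lemma Pr_and_eq_cPr_mul (hμ : ∀ ω, 0 ≤ μ ω) (E F : Ω → Prop) :
    Pr μ (fun ω => E ω ∧ F ω) = cPr μ E F * Pr μ F := by
  by_cases hF : Pr μ F = 0
  · rw [hF, mul_zero, Pr_and_eq_zero_of_Pr_eq_zero μ hμ hF]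
  · rw [cPr, div_mul_cancel₀ _ hF]

lemma cPr_eq_sum_cPr_mul_cPr_of_condIndep (hμ : ∀ ω, 0 ≤ μ ω) {β γ : Type*} [Fintype β]
    (u : Ω → β) (x : Ω → γ) (E G : Ω → Prop) (k : γ)
    (hpos : Pr μ (fun ω => G ω ∧ x ω = k) ≠ 0)
    (hCI : ∀ j, cPr μ E (fun ω => G ω ∧ u ω = j ∧ x ω = k) = cPr μ E (fun ω => G ω ∧ u ω = j)) :
    cPr μ E (fun ω => G ω ∧ x ω = k) =
      ∑ j, cPr μ E (fun ω => G ω ∧ u ω = j) * cPr μ (fun ω => u ω = j) (fun ω => G ω ∧ x ω = k) := by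
  rw [eq_comm, cPr, eq_div_iff hpos, Finset.sum_mul,
    Pr_eq_sum_Pr_and_eq μ u (fun ω => E ω ∧ G ω ∧ x ω = k)]
  refine Finset.sum_congr rfl fun j _ => ?_
  calc cPr μ E (fun ω => G ω ∧ u ω = j) * cPr μ (fun ω => u ω = j) (fun ω => G ω ∧ x ω = k) *
        Pr μ (fun ω => G ω ∧ x ω = k)
      = cPr μ E (fun ω => G ω ∧ u ω = j ∧ x ω = k) * Pr μ (fun ω => G ω ∧ u ω = j ∧ x ω = k) := by
        rw [mul_assoc, ← Pr_and_eq_cPr_mul μ hμ, hCI j]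
        exact congrArg _ (Pr_congr μ fun ω => by tauto)
    _ = Pr μ (fun ω => (E ω ∧ G ω ∧ x ω = k) ∧ u ω = j) := by
        rw [← Pr_and_eq_cPr_mul μ hμ]
        exact Pr_congr μ fun ω => by tauto

lemma cPr_matrix_eq_mul_of_condIndep (hμ : ∀ ω, 0 ≤ μ ω) {ι β γ : Type*} [Fintype β]
    (E : ι → Ω → Prop) (G : Ω → Prop) (u : Ω → β) (x : Ω → γ)
    (hpos : ∀ k, Pr μ (fun ω => G ω ∧ x ω = k) ≠ 0)
    (hCI : ∀ i j k, cPr μ (E i) (fun ω => G ω ∧ u ω = j ∧ x ω = k) =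
      cPr μ (E i) (fun ω => G ω ∧ u ω = j)) :
    (Matrix.of fun i k => cPr μ (E i) (fun ω => G ω ∧ x ω = k)) =
      (Matrix.of fun i j => cPr μ (E i) (fun ω => G ω ∧ u ω = j)) *
        Matrix.of fun j k => cPr μ (fun ω => u ω = j) (fun ω => G ω ∧ x ω = k) := by
  ext i k
  exact cPr_eq_sum_cPr_mul_cPr_of_condIndep μ hμ u x (E i) G k (hpos k) (hCI i · k)

end Probability

lemma Matrix.mul_mul_mul_inv_mul_cancel {m n R : Type*} [Fintype n] [DecidableEq n] [CommRing R]
    (A : Matrix m n R) {B M : Matrix n n R} (hB : IsUnit B.det) (hM : IsUnit M.det) :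
    A * M * (B * M)⁻¹ * B = A := by
  simp only [Matrix.mul_inv_rev, Matrix.mul_assoc]
  rw [Matrix.mul_nonsing_inv_cancel_left _ _ hM, Matrix.nonsing_inv_mul _ hB, Matrix.mul_one]

theorem effect_restoration_factorization_general
    {Ω : Type*} [Fintype Ω] (μ : Ω → ℝ) {n nw nz : ℕ} {Aty : Type*}
    (x : Ω → Fin n) (y : Ω → Fin n) (u : Ω → Fin n)
    (w : Ω → Fin nw) (z : Ω → Fin nz) (a : Ω → Aty)
    (hμ : ∀ ω, 0 ≤ μ ω)
    (av : Aty) (zv : Fin nz)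
    (hposx : ∀ k, 0 < Pr μ (fun ω => a ω = av ∧ x ω = k))
    -- x ⊥ (w,z) | (a,u)
    (hCI1 : ∀ (wv : Fin nw) (zv' : Fin nz) (j k : Fin n),
      cPr μ (fun ω => w ω = wv ∧ z ω = zv')
          (fun ω => a ω = av ∧ u ω = j ∧ x ω = k) =
        cPr μ (fun ω => w ω = wv ∧ z ω = zv') (fun ω => a ω = av ∧ u ω = j))
    -- y ⊥ x | (a,u)
    (hCI2 : ∀ (yv j k : Fin n),
      cPr μ (fun ω => y ω = yv) (fun ω => a ω = av ∧ u ω = j ∧ x ω = k) =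
        cPr μ (fun ω => y ω = yv) (fun ω => a ω = av ∧ u ω = j))
    (hinvUX : IsUnit (Matrix.of fun (j k : Fin n) =>
        cPr μ (fun ω => u ω = j) (fun ω => a ω = av ∧ x ω = k)).det)
    (hinvYU : IsUnit (Matrix.of fun (i j : Fin n) =>
        cPr μ (fun ω => y ω = i) (fun ω => a ω = av ∧ u ω = j)).det) :
    (Matrix.of fun (i : Fin nw) (j : Fin n) =>
        cPr μ (fun ω => w ω = i ∧ z ω = zv) (fun ω => a ω = av ∧ u ω = j)) =
    (Matrix.of fun (i : Fin nw) (k : Fin n) =>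
        cPr μ (fun ω => w ω = i ∧ z ω = zv) (fun ω => a ω = av ∧ x ω = k)) *
    (Matrix.of fun (i k : Fin n) =>
        cPr μ (fun ω => y ω = i) (fun ω => a ω = av ∧ x ω = k))⁻¹ *
    (Matrix.of fun (i j : Fin n) =>
        cPr μ (fun ω => y ω = i) (fun ω => a ω = av ∧ u ω = j)) := by
  have hpos : ∀ k, Pr μ (fun ω => a ω = av ∧ x ω = k) ≠ 0 := fun k => (hposx k).ne'
  rw [cPr_matrix_eq_mul_of_condIndep μ hμ (fun i ω => w ω = i ∧ z ω = zv) (a · = av) u x hpos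
      (fun i => hCI1 i zv),
    cPr_matrix_eq_mul_of_condIndep μ hμ (fun i ω => y ω = i) (a · = av) u x hpos hCI2,
    Matrix.mul_mul_mul_inv_mul_cancel _ hinvYU hinvUX]

/-- Lemma 5 of the paper: if `x ⊥ (w,z) | (a,u)` and `y ⊥ x | (a,u)` and the
square matrices `P(U|a,X)`, `P(Y|a,X)`, `P(Y|a,U)` are invertible, then
`P(W, z | a, U) = P(W, z | a, X) * P(Y | a, X)⁻¹ * P(Y | a, U)`.
Here `u, x, y` take values in sets of common cardinality `n`. -/
theorem effect_restoration_factorization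
    {Ω : Type*} [Fintype Ω] (μ : Ω → ℝ) {n nw nz : ℕ} {Aty : Type*}
    (x : Ω → Fin n) (y : Ω → Fin n) (u : Ω → Fin n)
    (w : Ω → Fin nw) (z : Ω → Fin nz) (a : Ω → Aty)
    (hμ : ∀ ω, 0 ≤ μ ω) (hsum : ∑ ω, μ ω = 1)
    (av : Aty) (zv : Fin nz)
    (hposu : ∀ j, 0 < Pr μ (fun ω => a ω = av ∧ u ω = j))
    (hposx : ∀ k, 0 < Pr μ (fun ω => a ω = av ∧ x ω = k))
    -- x ⊥ (w,z) | (a,u)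
    (hCI1 : ∀ (wv : Fin nw) (zv' : Fin nz) (j k : Fin n),
      cPr μ (fun ω => w ω = wv ∧ z ω = zv')
          (fun ω => a ω = av ∧ u ω = j ∧ x ω = k) =
        cPr μ (fun ω => w ω = wv ∧ z ω = zv') (fun ω => a ω = av ∧ u ω = j))
    -- y ⊥ x | (a,u)
    (hCI2 : ∀ (yv j k : Fin n),
      cPr μ (fun ω => y ω = yv) (fun ω => a ω = av ∧ u ω = j ∧ x ω = k) =
        cPr μ (fun ω => y ω = yv) (fun ω => a ω = av ∧ u ω = j))
    (hinvUX : IsUnit (Matrix.of fun (j k : Fin n) =>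
        cPr μ (fun ω => u ω = j) (fun ω => a ω = av ∧ x ω = k)).det)
    (hinvYX : IsUnit (Matrix.of fun (i k : Fin n) =>
        cPr μ (fun ω => y ω = i) (fun ω => a ω = av ∧ x ω = k)).det)
    (hinvYU : IsUnit (Matrix.of fun (i j : Fin n) =>
        cPr μ (fun ω => y ω = i) (fun ω => a ω = av ∧ u ω = j)).det) :
    (Matrix.of fun (i : Fin nw) (j : Fin n) =>
        cPr μ (fun ω => w ω = i ∧ z ω = zv) (fun ω => a ω = av ∧ u ω = j)) =
    (Matrix.of fun (i : Fin nw) (k : Fin n) =>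
        cPr μ (fun ω => w ω = i ∧ z ω = zv) (fun ω => a ω = av ∧ x ω = k)) *
    (Matrix.of fun (i k : Fin n) =>
        cPr μ (fun ω => y ω = i) (fun ω => a ω = av ∧ x ω = k))⁻¹ *
    (Matrix.of fun (i j : Fin n) =>
        cPr μ (fun ω => y ω = i) (fun ω => a ω = av ∧ u ω = j)) :=
  effect_restoration_factorization_general μ x y u w z a hμ av zv hposx hCI1 hCI2 hinvUX hinvYU
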